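/- Under Assumptions (A1)–(A4), fix a noise path Z with Hölder constant Λ, let Y be the corresponding pathwise solution and, for each N with max{c3, c1/(Y(0) − φ(0))^p}·Δ_N < 1, let Ŷ_N be the corresponding drift-implicit Euler scheme. Then for every r ≥ 1 there exists a constant 𝒞 > 0, independent of N, such that max_{n=0,…,N} |1/(Y(t_n) − φ(t_n)) − 1/(Ŷ_N(t_n) − φ(t_n))|^r ≤ 𝒞·Δ_N^{λr} for every such N. -/

import Mathlib

/-!
On the compact interval `[0, T]` the continuous solution `Y` keeps a positive distance `m` from
the boundary `phi`. There (A2) makes the drift Lipschitz in `y` and λ-Hölder in `t`, and `Y`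
inherits λ-Hölder regularity from `Z`, so `s ↦ b s (Y s)` is λ-Hölder and one step of the
implicit scheme commits a local error `O(Δ^(1+λ))`. The one-sided bound `∂b/∂y < c3` of (A4)
makes the implicit step stable, `(1 - c3 Δ) |e_(k+1)| ≤ |e_k| + O(Δ^(1+λ))`, and a discrete
Gronwall argument gives `|Y(t_n) - Ŷ_N(t_n)| = O(Δ^λ)`. Once this error is below `m/2`, both
`Y(t_n) - phi(t_n)` and `Ŷ_N(t_n) - phi(t_n)` are at least `m/2`, where `x ↦ 1/x` is Lipschitz;
the finitely many smaller `N` only enlarge the constant.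
-/

open MeasureTheory Filter Set Topology

lemma continuousOn_of_abs_sub_le_rpow {f : ℝ → ℝ} {s : Set ℝ} {K lam : ℝ} (hlam : 0 < lam)
    (hf : ∀ x ∈ s, ∀ y ∈ s, |f y - f x| ≤ K * |y - x| ^ lam) : ContinuousOn f s := by
  intro x hx
  have hK : Tendsto (fun y => K * |y - x| ^ lam) (𝓝[s] x) (𝓝 0) := by
    have : ContinuousAt (fun y => K * |y - x| ^ lam) x := by fun_prop (disch := positivity)
    simpa [Real.zero_rpow hlam.ne'] using this.tendsto.mono_left nhdsWithin_le_nhds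
  rw [ContinuousWithinAt, tendsto_iff_norm_sub_tendsto_zero]
  exact squeeze_zero' (.of_forall fun _ => norm_nonneg _)
    (eventually_nhdsWithin_of_forall fun y hy => hf x hx y hy) hK

lemma abs_le_rpow_mul_abs_rpow {x T lam : ℝ} (hlam : 0 < lam) (hlam1 : lam ≤ 1) (hx : |x| ≤ T) :
    |x| ≤ T ^ (1 - lam) * |x| ^ lam := by
  rcases (abs_nonneg x).eq_or_lt with h | h
  · rw [← h, Real.zero_rpow hlam.ne', mul_zero]
  calc |x| = |x| ^ (1 - lam) * |x| ^ lam := by simp [← Real.rpow_add h]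
    _ ≤ T ^ (1 - lam) * |x| ^ lam := by gcongr

lemma abs_integral_sub_mul_le {g : ℝ → ℝ} {a c M : ℝ} (hac : a ≤ c)
    (hg : IntervalIntegrable g volume a c) (h : ∀ x ∈ Icc a c, |g x - g c| ≤ M) :
    |(∫ x in a..c, g x) - g c * (c - a)| ≤ M * (c - a) := by
  have hint : ∫ x in a..c, (g x - g c) = (∫ x in a..c, g x) - g c * (c - a) := by
    rw [intervalIntegral.integral_sub hg intervalIntegrable_const, intervalIntegral.integral_const,
      smul_eq_mul, mul_comm]
  rw [← hint, ← abs_of_nonneg (sub_nonneg.2 hac)]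
  refine intervalIntegral.norm_integral_le_of_norm_le_const (f := fun x => g x - g c) fun x hx => ?_
  rw [uIoc_of_le hac] at hx
  exact h x (Ioc_subset_Icc_self hx)

lemma sub_mul_sub_le_of_hasDerivAt_le {f f' : ℝ → ℝ} {a c x y : ℝ}
    (hf : ∀ z, a < z → HasDerivAt f (f' z) z) (hf' : ∀ z, a < z → f' z ≤ c)
    (hx : a < x) (hy : a < y) : (x - y) * (f x - f y) ≤ c * (x - y) ^ 2 := by
  wlog hxy : y ≤ x generalizing x y
  · have := this hy hx (le_of_not_ge hxy)
    linarith
  have hmvt : f x - f y ≤ c * (x - y) := by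
    refine (convex_Ioi a).image_sub_le_mul_sub_of_deriv_le
      (fun z hz => (hf z hz).continuousAt.continuousWithinAt) ?_ ?_ y hy x hx hxy
    · rw [interior_Ioi]
      exact fun z hz => (hf z hz).differentiableAt.differentiableWithinAt
    · rw [interior_Ioi]
      exact fun z hz => (hf z hz).deriv ▸ hf' z hz
  nlinarith

lemma one_sub_mul_abs_le_of_implicit_step {e e' R D Δ c ρ : ℝ} (hΔ : 0 ≤ Δ)
    (h : e' = e + R + D * Δ) (hR : |R| ≤ ρ) (hD : e' * D ≤ c * e' ^ 2) :
    (1 - c * Δ) * |e'| ≤ |e| + ρ := by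
  rcases (abs_nonneg e').eq_or_lt with h0 | h0
  · rw [← h0]; linarith [abs_nonneg e, abs_nonneg R]
  have hsq : (1 - c * Δ) * |e'| * |e'| ≤ (|e| + ρ) * |e'| := by
    calc (1 - c * Δ) * |e'| * |e'| = e' * (e + R) + (e' * D - c * e' ^ 2) * Δ := by
          rw [mul_assoc, abs_mul_abs_self, h]; ring
      _ ≤ |e'| * (|e| + ρ) + 0 := by
          refine add_le_add ?_ (mul_nonpos_of_nonpos_of_nonneg (by linarith) hΔ)
          calc e' * (e + R) ≤ |e'| * |e + R| := by rw [← abs_mul]; exact le_abs_self _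
            _ ≤ |e'| * (|e| + ρ) := by gcongr; exact (abs_add_le _ _).trans (by linarith)
      _ = (|e| + ρ) * |e'| := by ring
  exact le_of_mul_le_mul_right hsq h0

lemma le_nat_mul_pow_mul_of_le_mul_add {a : ℕ → ℝ} {N : ℕ} {q ρ : ℝ} (hq : 1 ≤ q) (hρ : 0 ≤ ρ)
    (h0 : a 0 = 0) (h : ∀ k < N, a (k + 1) ≤ q * (a k + ρ)) :
    ∀ n ≤ N, a n ≤ n * q ^ n * ρ := by
  intro n hn
  induction n with
  | zero => simp [h0]
  | succ k ih =>
    have hqk : q * ρ ≤ q ^ (k + 1) * ρ := by gcongr; exact le_self_pow₀ hq k.succ_ne_zero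
    calc a (k + 1) ≤ q * (a k + ρ) := h k hn
      _ ≤ q * (k * q ^ k * ρ + ρ) := by gcongr; exact ih (by omega)
      _ = k * q ^ (k + 1) * ρ + q * ρ := by ring
      _ ≤ ((k + 1 : ℕ) : ℝ) * q ^ (k + 1) * ρ := by push_cast; linarith

lemma abs_le_of_implicit_euler {N : ℕ} {e R D : ℕ → ℝ} {Δ c ρ : ℝ} (hc : 0 ≤ c) (hΔ : 0 ≤ Δ)
    (hcΔ : c * Δ < 1) (h0 : e 0 = 0) (hstep : ∀ k < N, e (k + 1) = e k + R k + D k * Δ)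
    (hR : ∀ k < N, |R k| ≤ ρ) (hD : ∀ k < N, e (k + 1) * D k ≤ c * e (k + 1) ^ 2) (hρ : 0 ≤ ρ) :
    ∀ n ≤ N, |e n| ≤ n * (1 - c * Δ)⁻¹ ^ n * ρ := by
  have hpos : 0 < 1 - c * Δ := by linarith
  refine le_nat_mul_pow_mul_of_le_mul_add ?_ hρ (by simp [h0]) fun k hk => ?_
  · exact one_le_inv₀ hpos |>.2 (by nlinarith)
  · rw [← div_eq_inv_mul, le_div_iff₀ hpos, mul_comm]
    exact one_sub_mul_abs_le_of_implicit_step hΔ (hstep k hk) (hR k hk) (hD k hk)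

lemma inv_one_sub_pow_le_exp {x : ℝ} (n : ℕ) (hx : 0 ≤ x) (hx2 : x ≤ 1 / 2) :
    (1 - x)⁻¹ ^ n ≤ Real.exp (2 * n * x) := by
  have hpos : 0 < 1 - x := by linarith
  have hinv : (1 - x)⁻¹ ≤ Real.exp (2 * x) := by
    calc (1 - x)⁻¹ ≤ 1 + 2 * x := by rw [inv_le_iff_one_le_mul₀ hpos]; nlinarith
      _ ≤ Real.exp (2 * x) := by linarith [Real.add_one_le_exp (2 * x)]
  calc (1 - x)⁻¹ ^ n ≤ Real.exp (2 * x) ^ n := by gcongr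
    _ = Real.exp (2 * n * x) := by rw [← Real.exp_nat_mul]; ring_nf

lemma abs_one_div_sub_one_div_le {u v m : ℝ} (hm : 0 < m) (hu : m ≤ u) (huv : |u - v| ≤ m / 2) :
    |1 / u - 1 / v| ≤ 2 / m ^ 2 * |u - v| := by
  have hv : m / 2 ≤ v := by linarith [(abs_le.1 huv).2]
  have hu0 : 0 < u := by linarith
  have hv0 : 0 < v := by linarith
  rw [div_sub_div _ _ hu0.ne' hv0.ne', abs_div, abs_of_pos (mul_pos hu0 hv0), one_mul, mul_one,
    abs_sub_comm, div_le_iff₀ (mul_pos hu0 hv0)]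
  calc |u - v| = 2 / m ^ 2 * |u - v| * (m * (m / 2)) := by field_simp
    _ ≤ 2 / m ^ 2 * |u - v| * (u * v) := by gcongr

lemma exists_forall_le_mul_of_eventually {P : ℕ → Prop} {f : ℕ → ℕ → ℝ} {g : ℕ → ℝ} {C : ℝ}
    (hg : ∀ N, 0 < N → 0 < g N) (h : ∀ᶠ N in atTop, P N → ∀ n ≤ N, f N n ≤ C * g N) :
    ∃ C' > 0, ∀ N, 0 < N → P N → ∀ n ≤ N, f N n ≤ C' * g N := by
  obtain ⟨N₀, hN₀⟩ := eventually_atTop.1 h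
  obtain ⟨B, hB⟩ := ((finite_Iio N₀).prod (finite_Iio N₀)).image
    (fun q : ℕ × ℕ => f q.1 q.2 / g q.1) |>.bddAbove
  have hC : C ≤ max (max C B) 1 := (le_max_left _ _).trans (le_max_left _ _)
  have hBC : B ≤ max (max C B) 1 := (le_max_right _ _).trans (le_max_left _ _)
  refine ⟨max (max C B) 1, by positivity, fun N hN hP n hn => ?_⟩
  have hgN := hg N hN
  rcases lt_or_ge N N₀ with hsmall | hbig
  · have hfg : f N n / g N ≤ B := hB ⟨(N, n), ⟨hsmall, hn.trans_lt hsmall⟩, rfl⟩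
    rw [div_le_iff₀ hgN] at hfg
    exact hfg.trans (by gcongr)
  · exact (hN₀ N hbig hP n hn).trans (by gcongr)

lemma IsCompact.exists_pos_forall_le {X : Type*} [TopologicalSpace X] {K : Set X} {f : X → ℝ}
    (hK : IsCompact K) (hf : ContinuousOn f K) (hpos : ∀ x ∈ K, 0 < f x) :
    ∃ m > 0, ∀ x ∈ K, m ≤ f x := by
  rcases K.eq_empty_or_nonempty with rfl | hne
  · exact ⟨1, one_pos, fun _ hx => hx.elim⟩
  obtain ⟨x₀, hx₀, hmin⟩ := hK.exists_isMinOn hne hf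
  exact ⟨f x₀, hpos x₀ hx₀, fun x hx => hmin hx⟩

section Solution

variable {T lam : ℝ} {g Y Z : ℝ → ℝ}

lemma sub_eq_integral_add_sub {Y0 : ℝ} (hg : ContinuousOn g (Icc 0 T))
    (hY : ∀ t ∈ Icc 0 T, Y t = Y0 + (∫ s in (0:ℝ)..t, g s) + Z t) :
    ∀ a ∈ Icc 0 T, ∀ c ∈ Icc 0 T, Y c - Y a = (∫ s in a..c, g s) + (Z c - Z a) := by
  intro a ha c hc
  have h0 : (0:ℝ) ∈ Icc 0 T := ⟨le_rfl, ha.1.trans ha.2⟩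
  have hint := fun x (hx : x ∈ Icc 0 T) =>
    (hg.mono (uIcc_subset_Icc h0 hx)).intervalIntegrable (μ := volume)
  rw [hY a ha, hY c hc, ← intervalIntegral.integral_interval_sub_left (hint c hc) (hint a ha)]
  ring

lemma abs_sub_le_of_eq_integral_add {B Lam : ℝ} (hlam : 0 < lam) (hlam1 : lam ≤ 1) (hB : 0 ≤ B)
    (hg : ∀ x ∈ Icc 0 T, |g x| ≤ B)
    (hZ : ∀ s ∈ Icc 0 T, ∀ t ∈ Icc 0 T, |Z t - Z s| ≤ Lam * |t - s| ^ lam)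
    (hY : ∀ a ∈ Icc 0 T, ∀ c ∈ Icc 0 T, Y c - Y a = (∫ s in a..c, g s) + (Z c - Z a)) :
    ∀ a ∈ Icc 0 T, ∀ c ∈ Icc 0 T, |Y c - Y a| ≤ (B * T ^ (1 - lam) + Lam) * |c - a| ^ lam := by
  intro a ha c hc
  have hint : |∫ s in a..c, g s| ≤ B * |c - a| := by
    refine intervalIntegral.norm_integral_le_of_norm_le_const (f := g) fun x hx => ?_
    exact hg x (uIcc_subset_Icc ha hc (uIoc_subset_uIcc hx))
  have hca : |c - a| ≤ T := abs_sub_le_iff.2 ⟨by linarith [hc.2, ha.1], by linarith [ha.2, hc.1]⟩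
  calc |Y c - Y a| ≤ |∫ s in a..c, g s| + |Z c - Z a| := by rw [hY a ha c hc]; exact abs_add_le _ _
    _ ≤ B * (T ^ (1 - lam) * |c - a| ^ lam) + Lam * |c - a| ^ lam := by
        gcongr
        · exact hint.trans (by gcongr; exact abs_le_rpow_mul_abs_rpow hlam hlam1 hca)
        · exact hZ a ha c hc
    _ = (B * T ^ (1 - lam) + Lam) * |c - a| ^ lam := by ring

lemma abs_integral_sub_mul_le_of_holder {Lg a c : ℝ} (hlam : 0 ≤ lam) (hLg : 0 ≤ Lg)
    (ha : a ∈ Icc 0 T) (hc : c ∈ Icc 0 T) (hac : a ≤ c) (hg : ContinuousOn g (Icc 0 T))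
    (hgH : ∀ x ∈ Icc 0 T, ∀ t ∈ Icc 0 T, |g x - g t| ≤ Lg * |x - t| ^ lam) :
    |(∫ x in a..c, g x) - g c * (c - a)| ≤ Lg * (c - a) ^ lam * (c - a) := by
  refine abs_integral_sub_mul_le hac (hg.mono (uIcc_subset_Icc ha hc)).intervalIntegrable
    fun x hx => (hgH x (Icc_subset_Icc ha.1 hc.2 hx) c hc).trans ?_
  rw [abs_sub_comm, abs_of_nonneg (sub_nonneg.2 hx.2)]
  gcongr <;> linarith [hx.1, hx.2]

end Solution

lemma natCast_mul_div_mem_Icc {T : ℝ} {k N : ℕ} (hT : 0 ≤ T) (hk : k ≤ N) :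
    (k : ℝ) * T / N ∈ Icc 0 T := by
  rcases N.eq_zero_or_pos with rfl | hN
  · simpa using hT
  have hN' : (0 : ℝ) < N := Nat.cast_pos.2 hN
  exact ⟨by positivity, (div_le_iff₀ hN').2 (by nlinarith [(Nat.cast_le (α := ℝ)).2 hk])⟩

section Drift

variable {T lam : ℝ} {phi Y Z : ℝ → ℝ} {b : ℝ → ℝ → ℝ}

lemma abs_drift_sub_le {ε L CY : ℝ} (hL : 0 ≤ L)
    (hlip : ∀ t1 ∈ Icc 0 T, ∀ t2 ∈ Icc 0 T, ∀ y1 y2 : ℝ, phi t1 + ε < y1 → phi t2 + ε < y2 →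
      |b t1 y1 - b t2 y2| ≤ L * (|y1 - y2| + |t1 - t2| ^ lam))
    (hgap : ∀ t ∈ Icc 0 T, phi t + ε < Y t)
    (hY : ∀ a ∈ Icc 0 T, ∀ c ∈ Icc 0 T, |Y c - Y a| ≤ CY * |c - a| ^ lam) :
    ∀ x ∈ Icc 0 T, ∀ t ∈ Icc 0 T, |b x (Y x) - b t (Y t)| ≤ L * (CY + 1) * |x - t| ^ lam := by
  intro x hx t ht
  calc |b x (Y x) - b t (Y t)| ≤ L * (|Y x - Y t| + |x - t| ^ lam) :=
        hlip x hx t ht _ _ (hgap x hx) (hgap t ht)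
    _ ≤ L * (CY * |x - t| ^ lam + |x - t| ^ lam) := by gcongr; exact hY t ht x hx
    _ = L * (CY + 1) * |x - t| ^ lam := by ring

lemma exists_abs_drift_sub_le {c1 p Lam m : ℝ} (hT : 0 ≤ T) (hlam : 0 < lam) (hlam1 : lam ≤ 1)
    (hc1 : 0 < c1) (hLam : 0 < Lam) (hm : 0 < m)
    (hlip : ∀ ε : ℝ, 0 < ε → ε < 1 →
      ∀ t1 ∈ Icc 0 T, ∀ t2 ∈ Icc 0 T, ∀ y1 y2 : ℝ, phi t1 + ε < y1 → phi t2 + ε < y2 →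
        |b t1 y1 - b t2 y2| ≤ c1 / ε ^ p * (|y1 - y2| + |t1 - t2| ^ lam))
    (hgc : ContinuousOn (fun s => b s (Y s)) (Icc 0 T))
    (hgap : ∀ t ∈ Icc 0 T, m ≤ Y t - phi t)
    (hZ : ∀ s ∈ Icc 0 T, ∀ t ∈ Icc 0 T, |Z t - Z s| ≤ Lam * |t - s| ^ lam)
    (hY : ∀ a ∈ Icc 0 T, ∀ c ∈ Icc 0 T, Y c - Y a = (∫ s in a..c, b s (Y s)) + (Z c - Z a)) :
    ∃ Lg ≥ 0, ∀ x ∈ Icc 0 T, ∀ t ∈ Icc 0 T, |b x (Y x) - b t (Y t)| ≤ Lg * |x - t| ^ lam := by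
  obtain ⟨B, hB⟩ := isCompact_Icc.exists_bound_of_continuousOn hgc
  have hB0 : 0 ≤ B := (norm_nonneg _).trans (hB 0 ⟨le_rfl, hT⟩)
  obtain ⟨ε, hε, hε1, hεm⟩ : ∃ ε, 0 < ε ∧ ε < 1 ∧ ε < m :=
    ⟨min m 1 / 2, by positivity, by linarith [min_le_right m 1], by linarith [min_le_left m 1]⟩
  exact ⟨_, by positivity, abs_drift_sub_le (by positivity) (hlip ε hε hε1)
    (fun t ht => by linarith [hgap t ht])
    (abs_sub_le_of_eq_integral_add hlam hlam1 hB0 hB hZ hY)⟩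

lemma abs_sub_implicit_euler_le {Yh : ℕ → ℝ} {N : ℕ} {Lg c3 : ℝ} (hT : 0 < T) (hN : 0 < N)
    (hlam : 0 ≤ lam) (hLg : 0 ≤ Lg) (hc3 : 0 ≤ c3) (hc3N : c3 * (T / N) ≤ 1 / 2)
    (hgc : ContinuousOn (fun s => b s (Y s)) (Icc 0 T))
    (hgH : ∀ x ∈ Icc 0 T, ∀ t ∈ Icc 0 T, |b x (Y x) - b t (Y t)| ≤ Lg * |x - t| ^ lam)
    (hY : ∀ a ∈ Icc 0 T, ∀ c ∈ Icc 0 T, Y c - Y a = (∫ s in a..c, b s (Y s)) + (Z c - Z a))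
    (hosl : ∀ t ∈ Icc 0 T, ∀ y, phi t < y →
      (Y t - y) * (b t (Y t) - b t y) ≤ c3 * (Y t - y) ^ 2)
    (h0 : Yh 0 = Y 0)
    (hrec : ∀ k < N, phi (((k : ℝ) + 1) * T / N) < Yh (k + 1) ∧
      Yh (k + 1) = Yh k + b (((k : ℝ) + 1) * T / N) (Yh (k + 1)) * (T / N)
        + (Z (((k : ℝ) + 1) * T / N) - Z ((k : ℝ) * T / N))) :
    ∀ n ≤ N, |Y (n * T / N) - Yh n| ≤ Lg * T * Real.exp (2 * c3 * T) * (T / N) ^ lam := by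
  set Δ := T / (N : ℝ) with hΔdef
  have hN' : (0 : ℝ) < N := Nat.cast_pos.2 hN
  have hΔ : 0 < Δ := div_pos hT hN'
  have hgrid : ∀ k ≤ N, (k : ℝ) * T / N ∈ Icc 0 T := fun k hk => natCast_mul_div_mem_Icc hT.le hk
  have hgrid' : ∀ k < N, ((k : ℝ) + 1) * T / N ∈ Icc 0 T := fun k hk => by
    exact_mod_cast hgrid (k + 1) hk
  have hstep : ∀ k : ℕ, ((k : ℝ) + 1) * T / N - k * T / N = Δ := fun k => by ring
  have hR : ∀ k < N, |(∫ s in (k : ℝ) * T / N..((k : ℝ) + 1) * T / N, b s (Y s))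
      - b (((k : ℝ) + 1) * T / N) (Y (((k : ℝ) + 1) * T / N)) * Δ| ≤ Lg * Δ ^ lam * Δ := by
    intro k hk
    rw [← hstep k]
    exact abs_integral_sub_mul_le_of_holder hlam hLg (hgrid k hk.le) (hgrid' k hk)
      (by linarith [hstep k]) hgc hgH
  have herr := abs_le_of_implicit_euler (N := N) (e := fun k => Y (k * T / N) - Yh k)
    (D := fun k => b (((k : ℝ) + 1) * T / N) (Y (((k : ℝ) + 1) * T / N))
      - b (((k : ℝ) + 1) * T / N) (Yh (k + 1)))
    hc3 hΔ.le (by linarith) (by simp [h0]) (fun k hk => ?_) hR (fun k hk => ?_) (by positivity)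
  · intro n hn
    have hq0 : 0 ≤ (1 - c3 * Δ)⁻¹ := inv_nonneg.2 (by linarith)
    have hq : (1 - c3 * Δ)⁻¹ ^ n ≤ Real.exp (2 * c3 * T) := by
      refine (inv_one_sub_pow_le_exp n (by positivity) hc3N).trans (Real.exp_le_exp.2 ?_)
      rw [show 2 * c3 * T = 2 * N * (c3 * Δ) by rw [hΔdef]; field_simp]
      gcongr
    calc |Y (n * T / N) - Yh n| ≤ n * (1 - c3 * Δ)⁻¹ ^ n * (Lg * Δ ^ lam * Δ) := herr n hn
      _ ≤ N * Real.exp (2 * c3 * T) * (Lg * Δ ^ lam * Δ) := by gcongr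
      _ = Lg * T * Real.exp (2 * c3 * T) * Δ ^ lam := by
          rw [hΔdef]; field_simp
  · obtain ⟨-, hYh⟩ := hrec k hk
    have := hY _ (hgrid k hk.le) _ (hgrid' k hk)
    push_cast
    linarith
  · push_cast
    exact hosl _ (hgrid' k hk) _ (hrec k hk).1

end Drift

lemma eventually_abs_one_div_sub_le {T lam m Ce : ℝ} {phi Y : ℝ → ℝ} {Yh : ℕ → ℕ → ℝ}
    {P : ℕ → Prop} (hT : 0 ≤ T) (hlam : 0 < lam) (hm : 0 < m)
    (hgap : ∀ t ∈ Icc 0 T, m ≤ Y t - phi t)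
    (herr : ∀ᶠ N in atTop, P N → ∀ n ≤ N, |Y (n * T / N) - Yh N n| ≤ Ce * (T / N) ^ lam) :
    ∀ᶠ N in atTop, P N → ∀ n ≤ N,
      |1 / (Y (n * T / N) - phi (n * T / N)) - 1 / (Yh N n - phi (n * T / N))|
        ≤ 2 / m ^ 2 * Ce * (T / N) ^ lam := by
  have hsmall : Tendsto (fun N : ℕ => Ce * (T / N) ^ lam) atTop (𝓝 0) := by
    simpa [Real.zero_rpow hlam.ne'] using
      ((tendsto_const_div_atTop_nhds_zero_nat T).rpow_const (Or.inr hlam.le)).const_mul Ce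
  filter_upwards [herr, hsmall.eventually_lt_const (half_pos hm)] with N hN hNsmall hP n hn
  have hdiff := (hN hP n hn).trans hNsmall.le
  rw [mul_assoc]
  refine (abs_one_div_sub_one_div_le hm (hgap _ (natCast_mul_div_mem_Icc hT hn)) ?_).trans ?_
  · rwa [sub_sub_sub_cancel_right]
  · rw [sub_sub_sub_cancel_right]; gcongr; exact hN hP n hn

theorem stmt_18_general
    (T lam : ℝ) (hT : 0 < T) (hlam : lam ∈ Set.Ioo (0:ℝ) 1)
    (phi : ℝ → ℝ) (K : ℝ)
    (hphiH : ∀ s ∈ Set.Icc (0:ℝ) T, ∀ t ∈ Set.Icc (0:ℝ) T, |phi t - phi s| ≤ K * |t - s| ^ lam)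
    (b : ℝ → ℝ → ℝ) (c1 p : ℝ)
    (hc1 : 0 < c1)
    (hA2cont : ContinuousOn (fun q : ℝ × ℝ => b q.1 q.2)
      {q : ℝ × ℝ | q.1 ∈ Set.Icc (0:ℝ) T ∧ phi q.1 < q.2})
    (hA2lip : ∀ ε : ℝ, 0 < ε → ε < 1 →
      ∀ t1 ∈ Set.Icc (0:ℝ) T, ∀ t2 ∈ Set.Icc (0:ℝ) T, ∀ y1 y2 : ℝ,
        phi t1 + ε < y1 → phi t2 + ε < y2 →
        |b t1 y1 - b t2 y2| ≤ c1 / ε ^ p * (|y1 - y2| + |t1 - t2| ^ lam))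
    (Y0 : ℝ)
    (bp : ℝ → ℝ → ℝ) (c3 : ℝ) (hc3 : 0 < c3)
    (hA4deriv : ∀ t ∈ Set.Icc (0:ℝ) T, ∀ y : ℝ, phi t < y →
      HasDerivAt (fun x => b t x) (bp t y) y)
    (hA4lt : ∀ t ∈ Set.Icc (0:ℝ) T, ∀ y : ℝ, phi t < y → bp t y < c3)
    (Z : ℝ → ℝ) (Lam : ℝ) (hLam : 0 < Lam) (hZ0 : Z 0 = 0)
    (hZH : ∀ s ∈ Set.Icc (0:ℝ) T, ∀ t ∈ Set.Icc (0:ℝ) T, |Z t - Z s| ≤ Lam * |t - s| ^ lam)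
    (Y : ℝ → ℝ) (hYc : ContinuousOn Y (Set.Icc (0:ℝ) T))
    (hYsand : ∀ t ∈ Set.Icc (0:ℝ) T, phi t < Y t)
    (hYeq : ∀ t ∈ Set.Icc (0:ℝ) T, Y t = Y0 + (∫ s in (0:ℝ)..t, b s (Y s)) + Z t)
    (Yh : ℕ → ℕ → ℝ) (hYh0 : ∀ N : ℕ, Yh N 0 = Y0)
    (hYhrec : ∀ N : ℕ, 0 < N → max c3 (c1 / (Y0 - phi 0) ^ p) * (T / (N : ℝ)) < 1 → ∀ k : ℕ, k < N →
      phi (((k : ℝ) + 1) * T / (N : ℝ)) < Yh N (k + 1) ∧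
      Yh N (k + 1) = Yh N k + b (((k : ℝ) + 1) * T / (N : ℝ)) (Yh N (k + 1)) * (T / (N : ℝ))
        + (Z (((k : ℝ) + 1) * T / (N : ℝ)) - Z ((k : ℝ) * T / (N : ℝ))))
    :
    ∀ r : ℝ, 1 ≤ r → ∃ C : ℝ, 0 < C ∧
      ∀ N : ℕ, 0 < N → max c3 (c1 / (Y0 - phi 0) ^ p) * (T / (N : ℝ)) < 1 →
        ∀ n : ℕ, n ≤ N →
          |1 / (Y ((n : ℝ) * T / (N : ℝ)) - phi ((n : ℝ) * T / (N : ℝ))) - 1 / (Yh N n - phi ((n : ℝ) * T / (N : ℝ)))| ^ r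
            ≤ C * (T / (N : ℝ)) ^ (lam * r) := by
  intro r hr
  have hgc : ContinuousOn (fun s => b s (Y s)) (Icc 0 T) :=
    hA2cont.comp (continuousOn_id.prodMk hYc) fun s hs => ⟨hs, hYsand s hs⟩
  obtain ⟨m, hm, hgap⟩ : ∃ m > 0, ∀ t ∈ Icc 0 T, m ≤ Y t - phi t :=
    isCompact_Icc.exists_pos_forall_le (hYc.sub (continuousOn_of_abs_sub_le_rpow hlam.1 hphiH))
      fun t ht => sub_pos.2 (hYsand t ht)
  have hYinc := sub_eq_integral_add_sub hgc hYeq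
  obtain ⟨Lg, hLg, hgH⟩ := exists_abs_drift_sub_le hT.le hlam.1 hlam.2.le hc1 hLam hm hA2lip hgc
    hgap hZH hYinc
  have hosl := fun t (ht : t ∈ Icc 0 T) (y : ℝ) (hy : phi t < y) =>
    sub_mul_sub_le_of_hasDerivAt_le (hA4deriv t ht) (fun z hz => (hA4lt t ht z hz).le)
      (hYsand t ht) hy
  have herr : ∀ᶠ N : ℕ in atTop, max c3 (c1 / (Y0 - phi 0) ^ p) * (T / N) < 1 →
      ∀ n ≤ N, |Y (n * T / N) - Yh N n| ≤ Lg * T * Real.exp (2 * c3 * T) * (T / N) ^ lam := by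
    have hc3Δ := (tendsto_const_div_atTop_nhds_zero_nat T).const_mul c3
    filter_upwards [eventually_gt_atTop 0, hc3Δ.eventually_lt_const (by norm_num : c3 * 0 < 1 / 2)]
      with N hN hc3N hcond
    exact abs_sub_implicit_euler_le hT hN hlam.1.le hLg hc3.le hc3N.le hgc hgH hYinc hosl
      (by simpa [hZ0, hYh0 N] using (hYeq 0 ⟨le_rfl, hT.le⟩).symm) (hYhrec N hN hcond)
  obtain ⟨C, hC0, hC⟩ := exists_forall_le_mul_of_eventually (fun N hN => by positivity)
    (eventually_abs_one_div_sub_le hT.le hlam.1 hm hgap herr)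
  refine ⟨C ^ r, by positivity, fun N hN hcond n hn => ?_⟩
  calc _ ≤ (C * (T / N) ^ lam) ^ r := by gcongr; exact hC N hN hcond n hn
    _ = C ^ r * (T / N) ^ (lam * r) := by
      rw [Real.mul_rpow hC0.le (by positivity), ← Real.rpow_mul (by positivity)]

theorem stmt_18
    (T lam : ℝ) (hT : 0 < T) (hlam : lam ∈ Set.Ioo (0:ℝ) 1)
    (phi : ℝ → ℝ) (K : ℝ) (hK : 0 < K)
    (hphiH : ∀ s ∈ Set.Icc (0:ℝ) T, ∀ t ∈ Set.Icc (0:ℝ) T, |phi t - phi s| ≤ K * |t - s| ^ lam)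
    (b : ℝ → ℝ → ℝ) (c1 p c2 ystar gam : ℝ)
    (hc1 : 0 < c1) (hp : 1 < p) (hc2 : 0 < c2) (hystar : 0 < ystar)
    (hgam : 1 / lam - 1 < gam)
    (hA2cont : ContinuousOn (fun q : ℝ × ℝ => b q.1 q.2)
      {q : ℝ × ℝ | q.1 ∈ Set.Icc (0:ℝ) T ∧ phi q.1 < q.2})
    (hA2lip : ∀ ε : ℝ, 0 < ε → ε < 1 →
      ∀ t1 ∈ Set.Icc (0:ℝ) T, ∀ t2 ∈ Set.Icc (0:ℝ) T, ∀ y1 y2 : ℝ,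
        phi t1 + ε < y1 → phi t2 + ε < y2 →
        |b t1 y1 - b t2 y2| ≤ c1 / ε ^ p * (|y1 - y2| + |t1 - t2| ^ lam))
    (hA3 : ∀ t ∈ Set.Icc (0:ℝ) T, ∀ y : ℝ, phi t < y → y ≤ phi t + ystar →
      c2 / (y - phi t) ^ gam ≤ b t y)
    (Y0 : ℝ) (hA1 : phi 0 < Y0)
    (bp : ℝ → ℝ → ℝ) (c3 : ℝ) (hc3 : 0 < c3)
    (hA4deriv : ∀ t ∈ Set.Icc (0:ℝ) T, ∀ y : ℝ, phi t < y →
      HasDerivAt (fun x => b t x) (bp t y) y)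
    (hA4cont : ContinuousOn (fun q : ℝ × ℝ => bp q.1 q.2)
      {q : ℝ × ℝ | q.1 ∈ Set.Icc (0:ℝ) T ∧ phi q.1 < q.2})
    (hA4lt : ∀ t ∈ Set.Icc (0:ℝ) T, ∀ y : ℝ, phi t < y → bp t y < c3)
    (Z : ℝ → ℝ) (Lam : ℝ) (hLam : 0 < Lam) (hZ0 : Z 0 = 0)
    (hZH : ∀ s ∈ Set.Icc (0:ℝ) T, ∀ t ∈ Set.Icc (0:ℝ) T, |Z t - Z s| ≤ Lam * |t - s| ^ lam)
    (Y : ℝ → ℝ) (hYc : ContinuousOn Y (Set.Icc (0:ℝ) T))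
    (hYsand : ∀ t ∈ Set.Icc (0:ℝ) T, phi t < Y t)
    (hYeq : ∀ t ∈ Set.Icc (0:ℝ) T, Y t = Y0 + (∫ s in (0:ℝ)..t, b s (Y s)) + Z t)
    (Yh : ℕ → ℕ → ℝ) (hYh0 : ∀ N : ℕ, Yh N 0 = Y0)
    (hYhrec : ∀ N : ℕ, 0 < N → max c3 (c1 / (Y0 - phi 0) ^ p) * (T / (N : ℝ)) < 1 → ∀ k : ℕ, k < N →
      phi (((k : ℝ) + 1) * T / (N : ℝ)) < Yh N (k + 1) ∧
      Yh N (k + 1) = Yh N k + b (((k : ℝ) + 1) * T / (N : ℝ)) (Yh N (k + 1)) * (T / (N : ℝ))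
        + (Z (((k : ℝ) + 1) * T / (N : ℝ)) - Z ((k : ℝ) * T / (N : ℝ))))
    :
    ∀ r : ℝ, 1 ≤ r → ∃ C : ℝ, 0 < C ∧
      ∀ N : ℕ, 0 < N → max c3 (c1 / (Y0 - phi 0) ^ p) * (T / (N : ℝ)) < 1 →
        ∀ n : ℕ, n ≤ N →
          |1 / (Y ((n : ℝ) * T / (N : ℝ)) - phi ((n : ℝ) * T / (N : ℝ))) - 1 / (Yh N n - phi ((n : ℝ) * T / (N : ℝ)))| ^ r
            ≤ C * (T / (N : ℝ)) ^ (lam * r) :=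
  stmt_18_general T lam hT hlam phi K hphiH b c1 p hc1 hA2cont hA2lip Y0 bp c3 hc3 hA4deriv hA4lt Z
    Lam hLam hZ0 hZH Y hYc hYsand hYeq Yh hYh0 hYhrec
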